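/- Consider a dipole with n parallel edges partitioned into color classes, where class i contains m_i halvable edges. The number of ways to choose, for each color class independently, a set of edges to project to half-edges such that the remaining edges in each class pair up into loops (i.e., the remaining count in each class is even), summed over all classes, is at most 2^(n/2) distinct resulting multisets of (number of half-edges, number of loops) per color class; in particular, the number of pairwise non-isomorphic half-quotients of a dipole with n edges is at most 2^(⌈n/2⌉). -/

import Mathlib

/-! The half-edge counts of a class of size `m` are the numbers `k ≤ m` with `k ≡ m (mod 2)`,
and halving is injective on them, so there are at most `m / 2 + 1 ≤ 2 ^ (m / 2)` of them. The
classes are chosen independently, so the count is at most `∏ 2 ^ (m i / 2) = 2 ^ ∑ m i / 2`,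
and `∑ m i / 2 ≤ n / 2`. -/

open Finset

def halfEdgeCounts (m : ℕ) : Finset ℕ :=
  (range (m + 1)).filter (· % 2 = m % 2)

theorem mem_halfEdgeCounts {m k : ℕ} : k ∈ halfEdgeCounts m ↔ k ≤ m ∧ k % 2 = m % 2 := by
  simp [halfEdgeCounts]

theorem card_halfEdgeCounts_le (m : ℕ) : #(halfEdgeCounts m) ≤ m / 2 + 1 := by
  have hinj : Set.InjOn (· / 2) (halfEdgeCounts m : Set ℕ) := by
    intro a ha b hb hab
    rw [mem_coe, mem_halfEdgeCounts] at ha hb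
    simp only at hab
    omega
  calc #(halfEdgeCounts m) ≤ #(range (m / 2 + 1)) :=
        card_le_card_of_injOn (· / 2)
          (fun k hk => mem_range.2 <| Nat.lt_succ_of_le <|
            Nat.div_le_div_right (mem_halfEdgeCounts.1 hk).1) hinj
    _ = m / 2 + 1 := card_range _

theorem Nat.sum_div_le_div_sum {ι : Type*} (s : Finset ι) (f : ι → ℕ) (d : ℕ) :
    ∑ i ∈ s, f i / d ≤ (∑ i ∈ s, f i) / d := by
  rcases Nat.eq_zero_or_pos d with rfl | hd
  · simp
  rw [Nat.le_div_iff_mul_le hd, sum_mul]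
  exact sum_le_sum fun i _ => Nat.div_mul_le_self _ _

theorem ncard_halfQuotients_le {ι : Type*} [Fintype ι] [DecidableEq ι] (m : ι → ℕ) :
    Set.ncard {h : ι → ℕ | ∀ i, h i ≤ m i ∧ h i % 2 = m i % 2} ≤ 2 ^ (∑ i, m i / 2) := by
  have hpi : {h : ι → ℕ | ∀ i, h i ≤ m i ∧ h i % 2 = m i % 2} =
      (Fintype.piFinset fun i => halfEdgeCounts (m i) : Set (ι → ℕ)) := by
    ext h
    simp [mem_halfEdgeCounts]
  rw [hpi, Set.ncard_coe_finset, Fintype.card_piFinset, ← prod_pow_eq_pow_sum]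
  exact prod_le_prod' fun i _ =>
    (card_halfEdgeCounts_le (m i)).trans (Nat.lt_two_pow_self).succ_le

/-- `h i` is the number of half-edges in class `i`; the remaining `m i - h i` edges of the
class pair up into loops. -/
theorem stmt_8_general (c n : ℕ) (m : Fin c → ℕ)
    (hsum : ∑ i, m i = n) :
    Set.ncard {h : Fin c → ℕ | ∀ i, h i ≤ m i ∧ h i % 2 = m i % 2} ≤
      2 ^ ((n + 1) / 2) := by
  calc _ ≤ 2 ^ (∑ i, m i / 2) := ncard_halfQuotients_le m
    _ ≤ 2 ^ (n / 2) := Nat.pow_le_pow_right two_pos (hsum ▸ Nat.sum_div_le_div_sum _ _ _)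
    _ ≤ 2 ^ ((n + 1) / 2) := Nat.pow_le_pow_right two_pos (by omega)

/-- A half-quotient of a dipole whose color classes have sizes `m i` is determined by the
number `h i` of half-edges in each class, where `h i ≤ m i` and `h i` has the same parity
as `m i` (the remaining `m i - h i` edges pair up into loops). -/
theorem stmt_8 (c n : ℕ) (m : Fin c → ℕ) (hm : ∀ i, 1 ≤ m i)
    (hsum : ∑ i, m i = n) :
    Set.ncard {h : Fin c → ℕ | ∀ i, h i ≤ m i ∧ h i % 2 = m i % 2} ≤
      2 ^ ((n + 1) / 2) :=
  stmt_8_general c n m hsum
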